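/- arXiv:2211.01495 — 2 statements merged into one kernel-verified Lean document; each statement's English description precedes it below -/
import Mathlib

section
/- Let G be a finite simple graph in which every vertex has positive degree that is edge transitive: for any two edges e_1, e_2 of G there exists a graph automorphism of G mapping e_1 onto e_2. Let λ be an eigenvalue of the normalized Laplacian L with eigenspace of dimension k, and let v_1, …, v_k be an orthonormal basis of that eigenspace. Then for every edge {x,y} of G, (1/k) Σ_{i=1}^{k} F(v_i, λ, {x,y}) = 0; that is, the edge derivative of λ with respect to any edge is zero. -/
/-!
Summed over an orthonormal basis `v_i` of the eigenspace, `F(v_i, λ, {a,b})` depends only on the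
degrees and on the kernel `P(a,b) = ∑ i, v_i a * v_i b` of the orthogonal projection onto the
eigenspace. An automorphism `φ` maps the eigenspace onto itself, so the `v_i ∘ φ` form another
orthonormal basis of it and `P(φ a, φ b) = P(a,b)`; by edge transitivity the edge derivative thus
takes one value on all edges. On the other hand, for any eigenvector `u`, `F(u, λ, {a,b})` splits
into the shares `(1-λ) u_a² / d_a - u_a u_b / √(d_a d_b)` of its two endpoints, and at each vertex
`a` the shares over the neighbours `b` cancel by the eigenvalue equation at `a`. Summing over
ordered edges, that common value times `∑ a, d_a` vanishes.
-/

open Finset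

variable {V : Type*} [Fintype V] [DecidableEq V]

/-- The normalized Laplacian `L = I - D^{-1/2} A D^{-1/2}` of a simple graph. -/
noncomputable def normLap (G : SimpleGraph V) [DecidableRel G.Adj] : Matrix V V ℝ :=
  fun x y =>
    if x = y then 1
    else if G.Adj x y then -(1 / Real.sqrt ((G.degree x : ℝ) * (G.degree y : ℝ)))
    else 0

/-- The Aksoy–Purvine–Young edge-derivative expression
`F(v, λ, {x,y}) = (1-λ)(v_x²/d_x + v_y²/d_y) − 2 v_x v_y / √(d_x d_y)`. -/
noncomputable def edgeDeriv (G : SimpleGraph V) [DecidableRel G.Adj]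
    (v : V → ℝ) (lam : ℝ) (x y : V) : ℝ :=
  (1 - lam) * (v x ^ 2 / (G.degree x : ℝ) + v y ^ 2 / (G.degree y : ℝ))
    - 2 * (v x * v y) / Real.sqrt ((G.degree x : ℝ) * (G.degree y : ℝ))

namespace Matrix

variable {l m n R : Type*} [Fintype m] [CommRing R]

theorem transpose_mul_self_eq_of_eq_mul [Fintype n] [DecidableEq m] {B B' : Matrix m n R}
    {C : Matrix m m R} (hB : B * Bᵀ = 1) (hB' : B' * B'ᵀ = 1) (hC : B' = C * B) :
    B'ᵀ * B' = Bᵀ * B := by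
  have hCC : C * Cᵀ = 1 :=
    calc C * Cᵀ = C * (B * Bᵀ) * Cᵀ := by rw [hB, Matrix.mul_one]
      _ = B' * B'ᵀ := by rw [hC, transpose_mul]; simp only [Matrix.mul_assoc]
      _ = 1 := hB'
  rw [hC, transpose_mul, Matrix.mul_assoc, ← Matrix.mul_assoc Cᵀ, mul_eq_one_comm.mp hCC,
    Matrix.one_mul]

theorem exists_eq_mul_of_forall_mem_span_range {B : Matrix m n R} {B' : Matrix l n R}
    (h : ∀ i, B' i ∈ Submodule.span R (Set.range B)) : ∃ C : Matrix l m R, B' = C * B := by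
  have h' : ∀ i, B' i ∈ LinearMap.range B.vecMulLinear := fun i => by
    rw [range_vecMulLinear]; exact h i
  choose C hC using h'
  exact ⟨C, funext fun i => (hC i).symm⟩

end Matrix

section Combinatorial

omit [DecidableEq V]

variable (G : SimpleGraph V) [DecidableRel G.Adj]

namespace SimpleGraph

theorem sum_sum_neighborFinset_comm {M : Type*} [AddCommMonoid M] (f : V → V → M) :
    ∑ a, ∑ b ∈ G.neighborFinset a, f a b = ∑ a, ∑ b ∈ G.neighborFinset a, f b a := by
  simp only [neighborFinset_eq_filter, sum_filter]
  rw [sum_comm]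
  simp only [adj_comm]

theorem eq_zero_of_forall_adj_eq_of_sum_eq_zero {f : V → V → ℝ} {x y : V} (hxy : G.Adj x y)
    (hf : ∀ a b, G.Adj a b → f a b = f x y) (h0 : ∑ a, ∑ b ∈ G.neighborFinset a, f a b = 0) :
    f x y = 0 := by
  have hsum : ∑ a, ∑ b ∈ G.neighborFinset a, f a b = (∑ a, (G.degree a : ℝ)) * f x y := by
    rw [sum_mul]
    refine sum_congr rfl fun a _ => ?_
    rw [sum_congr rfl fun b hb => hf a b ((G.mem_neighborFinset a b).1 hb), sum_const,
      card_neighborFinset_eq_degree, nsmul_eq_mul]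
  have hpos : 0 < ∑ a, (G.degree a : ℝ) :=
    sum_pos' (fun a _ => by positivity)
      ⟨x, mem_univ x, by exact_mod_cast G.degree_pos_iff_exists_adj x |>.2 ⟨y, hxy⟩⟩
  rw [hsum] at h0
  exact (mul_eq_zero.1 h0).resolve_left hpos.ne'

end SimpleGraph

open SimpleGraph

theorem edgeDeriv_comm (u : V → ℝ) (lam : ℝ) (a b : V) :
    edgeDeriv G u lam a b = edgeDeriv G u lam b a := by
  unfold edgeDeriv
  rw [mul_comm (G.degree a : ℝ)]
  ring

theorem sum_edgeDeriv_eq {ι : Type*} [Fintype ι] (v : ι → V → ℝ) (lam : ℝ) (a b : V) :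
    ∑ i, edgeDeriv G (v i) lam a b
      = (1 - lam) * ((∑ i, v i a * v i a) / G.degree a + (∑ i, v i b * v i b) / G.degree b)
        - 2 * (∑ i, v i a * v i b) / Real.sqrt ((G.degree a : ℝ) * (G.degree b : ℝ)) := by
  simp only [edgeDeriv, sq, sum_sub_distrib, sum_add_distrib, ← mul_sum, ← sum_div]

variable {G}

theorem sum_edgeDeriv_iso {ι : Type*} [Fintype ι] {v : ι → V → ℝ} {φ : G ≃g G}
    (hP : ∀ a b, ∑ i, v i (φ a) * v i (φ b) = ∑ i, v i a * v i b) (lam : ℝ) (a b : V) :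
    ∑ i, edgeDeriv G (v i) lam (φ a) (φ b) = ∑ i, edgeDeriv G (v i) lam a b := by
  simp only [sum_edgeDeriv_eq, hP, Iso.degree_eq]

theorem sum_edgeDeriv_eq_of_adj {ι : Type*} [Fintype ι] {v : ι → V → ℝ} {lam : ℝ}
    (hET : ∀ ⦃a b c d : V⦄, G.Adj a b → G.Adj c d → ∃ φ : G ≃g G, s(φ a, φ b) = s(c, d))
    (hP : ∀ φ : G ≃g G, ∀ a b, ∑ i, v i (φ a) * v i (φ b) = ∑ i, v i a * v i b)
    {a b c d : V} (hab : G.Adj a b) (hcd : G.Adj c d) :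
    ∑ i, edgeDeriv G (v i) lam a b = ∑ i, edgeDeriv G (v i) lam c d := by
  obtain ⟨φ, hφ⟩ := hET hab hcd
  rw [← sum_edgeDeriv_iso (hP φ)]
  rcases Sym2.eq_iff.1 hφ with ⟨ha, hb⟩ | ⟨ha, hb⟩
  · rw [ha, hb]
  · simp only [ha, hb, edgeDeriv_comm G _ _ d c]

variable (G) in
noncomputable def edgeDerivHalf (u : V → ℝ) (lam : ℝ) (a b : V) : ℝ :=
  (1 - lam) * (u a ^ 2 / G.degree a)
    - u a * u b / Real.sqrt ((G.degree a : ℝ) * (G.degree b : ℝ))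

theorem edgeDeriv_eq_edgeDerivHalf_add (u : V → ℝ) (lam : ℝ) (a b : V) :
    edgeDeriv G u lam a b = edgeDerivHalf G u lam a b + edgeDerivHalf G u lam b a := by
  unfold edgeDeriv edgeDerivHalf
  rw [mul_comm (G.degree b : ℝ)]
  ring

end Combinatorial

section NormLap

open SimpleGraph
open scoped Matrix

variable {G : SimpleGraph V} [DecidableRel G.Adj]

theorem normLap_mulVec_apply (u : V → ℝ) (a : V) :
    (normLap G).mulVec u a = u a - ∑ b ∈ G.neighborFinset a,
      u b / Real.sqrt ((G.degree a : ℝ) * (G.degree b : ℝ)) := by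
  have hL : ∀ b, normLap G a b = (if a = b then 1 else 0)
      - if G.Adj a b then 1 / Real.sqrt ((G.degree a : ℝ) * (G.degree b : ℝ)) else 0 := by
    intro b
    by_cases hab : a = b
    · subst hab; simp [normLap]
    · by_cases hadj : G.Adj a b <;> simp [normLap, hab, hadj]
  simp only [Matrix.mulVec, dotProduct, hL, sub_mul, ite_mul, one_mul, zero_mul, sum_sub_distrib,
    sum_ite_eq, mem_univ, if_true, neighborFinset_eq_filter, sum_filter, one_div_mul_eq_div]

theorem normLap_submatrix_iso (φ : G ≃g G) : (normLap G).submatrix φ φ = normLap G := by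
  ext a b
  simp [normLap, φ.injective.eq_iff, φ.map_adj_iff]

theorem normLap_mulVec_comp_iso (φ : G ≃g G) (u : V → ℝ) :
    (normLap G).mulVec (u ∘ φ) = (normLap G).mulVec u ∘ φ := by
  conv_lhs => rw [← normLap_submatrix_iso φ]
  rw [show ⇑φ = φ.toEquiv from rfl, Matrix.submatrix_mulVec_equiv]
  congr 2
  ext b
  exact congrArg u (φ.toEquiv.apply_symm_apply b)

theorem sum_mul_comp_iso {ι : Type*} [Fintype ι] [DecidableEq ι] {v : ι → V → ℝ} {lam : ℝ}
    (horth : ∀ i j, (∑ z, v i z * v j z) = if i = j then 1 else 0)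
    (heig : ∀ i, (normLap G).mulVec (v i) = lam • v i)
    (hspan : ∀ u : V → ℝ, (normLap G).mulVec u = lam • u →
      u ∈ Submodule.span ℝ (Set.range v))
    (φ : G ≃g G) (a b : V) :
    ∑ i, v i (φ a) * v i (φ b) = ∑ i, v i a * v i b := by
  set B : Matrix ι V ℝ := Matrix.of v
  have hB : B * Bᵀ = 1 := by
    ext i j
    simpa [B, Matrix.mul_apply, Matrix.one_apply] using horth i j
  have hBφ : B.submatrix id φ * (B.submatrix id φ)ᵀ = 1 := by
    rw [Matrix.transpose_submatrix, show ⇑φ = φ.toEquiv from rfl, Matrix.submatrix_mul_equiv, hB,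
      Matrix.submatrix_id_id]
  obtain ⟨C, hC⟩ := Matrix.exists_eq_mul_of_forall_mem_span_range (B := B) (B' := B.submatrix id φ)
    fun i => hspan (v i ∘ φ) (by rw [normLap_mulVec_comp_iso, heig i]; rfl)
  simpa [B, Matrix.mul_apply] using
    congrFun (congrFun (Matrix.transpose_mul_self_eq_of_eq_mul hB hBφ hC) a) b

theorem sum_neighborFinset_edgeDerivHalf {u : V → ℝ} {lam : ℝ}
    (hu : (normLap G).mulVec u = lam • u) (a : V) :
    ∑ b ∈ G.neighborFinset a, edgeDerivHalf G u lam a b = 0 := by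
  rcases (G.degree a).eq_zero_or_pos with hd | hd
  · rw [← card_neighborFinset_eq_degree, card_eq_zero] at hd
    simp [hd]
  have hneighbors : ∑ b ∈ G.neighborFinset a,
      u b / Real.sqrt ((G.degree a : ℝ) * (G.degree b : ℝ)) = (1 - lam) * u a := by
    have := congrFun hu a
    rw [normLap_mulVec_apply, Pi.smul_apply, smul_eq_mul] at this
    linarith
  simp only [edgeDerivHalf, sum_sub_distrib, sum_const, card_neighborFinset_eq_degree,
    nsmul_eq_mul, mul_div_assoc, ← mul_sum, hneighbors]
  field_simp
  ring

theorem sum_sum_neighborFinset_edgeDeriv {u : V → ℝ} {lam : ℝ}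
    (hu : (normLap G).mulVec u = lam • u) :
    ∑ a, ∑ b ∈ G.neighborFinset a, edgeDeriv G u lam a b = 0 := by
  simp only [edgeDeriv_eq_edgeDerivHalf_add, sum_add_distrib]
  rw [← sum_sum_neighborFinset_comm G (edgeDerivHalf G u lam)]
  simp [sum_neighborFinset_edgeDerivHalf hu]

end NormLap

theorem edge_transitive_edge_derivative_zero_general
    (G : SimpleGraph V) [DecidableRel G.Adj]
    (hET : ∀ ⦃a b c d : V⦄, G.Adj a b → G.Adj c d →
      ∃ φ : G ≃g G, s(φ a, φ b) = s(c, d))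
    (lam : ℝ) (k : ℕ)
    (v : Fin k → V → ℝ)
    (horth : ∀ i j, (∑ z, v i z * v j z) = if i = j then 1 else 0)
    (heig : ∀ i, (normLap G).mulVec (v i) = lam • v i)
    (hspan : ∀ u : V → ℝ, (normLap G).mulVec u = lam • u →
      u ∈ Submodule.span ℝ (Set.range v))
    (x y : V) (hxy : G.Adj x y) :
    (1 / (k : ℝ)) * ∑ i, edgeDeriv G (v i) lam x y = 0 := by
  have hconst : ∀ a b, G.Adj a b →
      ∑ i, edgeDeriv G (v i) lam a b = ∑ i, edgeDeriv G (v i) lam x y :=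
    fun a b hab => sum_edgeDeriv_eq_of_adj hET (sum_mul_comp_iso horth heig hspan) hab hxy
  have htotal : ∑ a, ∑ b ∈ G.neighborFinset a, ∑ i, edgeDeriv G (v i) lam a b = 0 := by
    rw [sum_congr rfl fun a _ => sum_comm, sum_comm]
    exact sum_eq_zero fun i _ => sum_sum_neighborFinset_edgeDeriv (heig i)
  rw [G.eq_zero_of_forall_adj_eq_of_sum_eq_zero (f := fun a b => ∑ i, edgeDeriv G (v i) lam a b)
    hxy hconst htotal, mul_zero]

theorem edge_transitive_edge_derivative_zero
    (G : SimpleGraph V) [DecidableRel G.Adj]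
    (hdeg : ∀ z : V, 0 < G.degree z)
    (hET : ∀ ⦃a b c d : V⦄, G.Adj a b → G.Adj c d →
      ∃ φ : G ≃g G, s(φ a, φ b) = s(c, d))
    (lam : ℝ) (k : ℕ) (hk : 0 < k)
    (v : Fin k → V → ℝ)
    (horth : ∀ i j, (∑ z, v i z * v j z) = if i = j then 1 else 0)
    (heig : ∀ i, (normLap G).mulVec (v i) = lam • v i)
    (hspan : ∀ u : V → ℝ, (normLap G).mulVec u = lam • u →
      u ∈ Submodule.span ℝ (Set.range v))
    (x y : V) (hxy : G.Adj x y) :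
    (1 / (k : ℝ)) * ∑ i, edgeDeriv G (v i) lam x y = 0 :=
  edge_transitive_edge_derivative_zero_general G hET lam k v horth heig hspan x y hxy
end

section
/- Let G be a finite simple graph on n vertices in which every vertex has positive degree that is edge transitive: for any two edges e_1, e_2 of G there exists a graph automorphism of G mapping e_1 onto e_2. Let v_1, …, v_n be an orthonormal basis of ℝ^n consisting of eigenvectors of the normalized Laplacian L with L v_i = λ_i v_i, and for a pair of vertices {x,y} define dK/d{x,y} := Σ_{i : λ_i ≠ 0} −(1/λ_i²)·F(v_i, λ_i, {x,y}). Then for every edge {x,y} of G, dK/d{x,y} = 0. -/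
/-!
For every eigenvector `v` of `L`, the sum of `F(v, λ, {c, d})` over the ordered edges `(c, d)`
vanishes: splitting `F` into two halves, the eigenvalue equation at `c` cancels the half
attached to `c`. Hence the sum of `dK/d{c,d}` over all ordered edges is zero.

On the other hand `dK/d{x,y}` is a combination of spectral sums `∑ i, h(λ_i) v_i(a) v_i(b)`, which
are entries of `p(L)` for a polynomial `p` interpolating `h` on the spectrum. Automorphisms
commute with `L`, so `dK` is automorphism invariant, and by edge transitivity it is constant on
edges. A constant whose sum over the `2|E| > 0` ordered edges vanishes is zero.
-/

open Finset

variable {V : Type*} [Fintype V] [DecidableEq V]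

/-- The edge derivative of Kemeny's constant with respect to the pair `{x,y}`:
`dK/d{x,y} = Σ_{i : λ_i ≠ 0} −(1/λ_i²) F(v_i, λ_i, {x,y})`. -/
noncomputable def kemenyDeriv (G : SimpleGraph V) [DecidableRel G.Adj] {n : ℕ}
    (w : Fin n → V → ℝ) (lam : Fin n → ℝ) (x y : V) : ℝ :=
  ∑ i, if lam i = 0 then 0 else -(1 / lam i ^ 2) * edgeDeriv G (w i) (lam i) x y

open Matrix

namespace Matrix

variable {ι : Type*} [Fintype ι]

theorem sum_apply_mul_apply_eq_ite_of_orthonormal {K : Type*} [Field K] [DecidableEq ι]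
    (hcard : Fintype.card ι = Fintype.card V) {w : ι → V → K}
    (horth : ∀ i j, ∑ z, w i z * w j z = if i = j then 1 else 0) (x y : V) :
    ∑ i, w i x * w i y = if x = y then 1 else 0 := by
  have hWWt : of w * (of w)ᵀ = 1 := by
    ext i j
    simp [mul_apply, one_apply, horth]
  have := congrFun₂ ((mul_eq_one_comm_of_equiv (Fintype.equivOfCardEq hcard)).mp hWWt) x y
  simpa [mul_apply, one_apply] using this

theorem apply_eq_sum_of_mulVec_eq_smul {R : Type*} [CommSemiring R] {w : ι → V → R}
    (hcompl : ∀ x y, ∑ i, w i x * w i y = if x = y then 1 else 0)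
    {M : Matrix V V R} {μ : ι → R} (heig : ∀ i, M *ᵥ w i = μ i • w i) (x y : V) :
    M x y = ∑ i, μ i * (w i x * w i y) := by
  calc M x y = ∑ z, M x z * ∑ i, w i z * w i y := by simp [hcompl]
    _ = ∑ i, (M *ᵥ w i) x * w i y := by
      simp only [mulVec, dotProduct, Finset.mul_sum, Finset.sum_mul]
      rw [Finset.sum_comm]
      simp only [mul_assoc]
    _ = ∑ i, μ i * (w i x * w i y) := by simp [heig, mul_assoc]

theorem aeval_mulVec_eq_smul {R : Type*} [CommRing R] {A : Matrix V V R} {v : V → R} {μ : R}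
    (h : A *ᵥ v = μ • v) (p : Polynomial R) : Polynomial.aeval A p *ᵥ v = p.eval μ • v := by
  have h' : toLinAlgEquiv' A v = μ • v := by rwa [toLinAlgEquiv'_apply]
  have := Module.End.aeval_apply_of_mem_apply_eq_smul (p := p) h'
  rwa [Polynomial.aeval_algEquiv, AlgHom.comp_apply, AlgEquiv.coe_toAlgHom,
    toLinAlgEquiv'_apply] at this

theorem aeval_submatrix_equiv {R : Type*} [CommSemiring R] (A : Matrix V V R) (ψ : V ≃ V)
    (p : Polynomial R) :
    (Polynomial.aeval A p).submatrix ψ ψ = Polynomial.aeval (A.submatrix ψ ψ) p := by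
  simpa using (Polynomial.aeval_algHom_apply (reindexAlgEquiv R R ψ.symm) A p).symm

-- Interpolating `h` on the spectrum by a polynomial `p` turns both sums into entries of
-- `aeval A p`, which is invariant under every relabelling that fixes `A`.
theorem sum_mul_apply_equiv_of_submatrix_eq {K : Type*} [Field K] {w : ι → V → K}
    (hcompl : ∀ x y, ∑ i, w i x * w i y = if x = y then 1 else 0)
    {A : Matrix V V K} {lam : ι → K} (heig : ∀ i, A *ᵥ w i = lam i • w i)
    {ψ : V ≃ V} (hψ : A.submatrix ψ ψ = A) (h : K → K) (x y : V) :
    ∑ i, h (lam i) * (w i (ψ x) * w i (ψ y)) = ∑ i, h (lam i) * (w i x * w i y) := by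
  classical
  set p := Lagrange.interpolate (univ.image lam) id h
  have hp : ∀ i, p.eval (lam i) = h (lam i) := fun i =>
    Lagrange.eval_interpolate_at_node h (Set.injOn_id _) (mem_image_of_mem lam (mem_univ i))
  have hspec : ∀ a b, Polynomial.aeval A p a b = ∑ i, h (lam i) * (w i a * w i b) := by
    intro a b
    simpa only [hp] using
      apply_eq_sum_of_mulVec_eq_smul hcompl (fun i => aeval_mulVec_eq_smul (heig i) p) a b
  rw [← hspec, ← hspec, ← submatrix_apply (Polynomial.aeval A p) ψ ψ, aeval_submatrix_equiv, hψ]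

end Matrix

namespace SimpleGraph

variable (G : SimpleGraph V) [DecidableRel G.Adj]

theorem normLap_submatrix_iso (φ : G ≃g G) : (normLap G).submatrix φ φ = normLap G := by
  ext x y
  simp [normLap, φ.injective.eq_iff, φ.map_adj_iff]

theorem normLap_mulVec_apply (v : V → ℝ) (c : V) :
    (normLap G *ᵥ v) c
      = v c - ∑ d ∈ G.neighborFinset c, v d / √((G.degree c : ℝ) * G.degree d) := by
  have hrow : ∀ z, normLap G c z * v z = (if z = c then v z else 0)
      - if G.Adj c z then v z / √((G.degree c : ℝ) * G.degree z) else 0 := by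
    intro z
    by_cases hcz : c = z
    · subst hcz; simp [normLap]
    · by_cases hadj : G.Adj c z
      · simp only [normLap, if_neg hcz, if_neg (Ne.symm hcz), if_pos hadj]
        ring
      · simp [normLap, hcz, Ne.symm hcz, hadj]
  simp only [Matrix.mulVec, dotProduct, hrow, sum_sub_distrib, sum_ite_eq', mem_univ, if_true,
    neighborFinset_eq_filter, sum_filter]

theorem sum_neighborFinset_div_sqrt_of_mulVec_eq_smul {v : V → ℝ} {lam : ℝ}
    (h : normLap G *ᵥ v = lam • v) (c : V) :
    ∑ d ∈ G.neighborFinset c, v d / √((G.degree c : ℝ) * G.degree d) = (1 - lam) * v c := by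
  have hc := congrFun h c
  rw [normLap_mulVec_apply, Pi.smul_apply, smul_eq_mul] at hc
  linarith

omit [DecidableEq V] in
theorem sum_sum_neighborFinset_swap {M : Type*} [AddCommMonoid M] (f : V → V → M) :
    ∑ c, ∑ d ∈ G.neighborFinset c, f d c = ∑ c, ∑ d ∈ G.neighborFinset c, f c d := by
  simp only [neighborFinset_eq_filter, sum_filter]
  rw [sum_comm]
  simp only [G.adj_comm]

noncomputable def halfEdgeDeriv (v : V → ℝ) (lam : ℝ) (c d : V) : ℝ :=
  (1 - lam) * v c ^ 2 / G.degree c - v c * v d / √((G.degree c : ℝ) * G.degree d)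

omit [DecidableEq V] in
theorem edgeDeriv_eq_halfEdgeDeriv_add (v : V → ℝ) (lam : ℝ) (c d : V) :
    edgeDeriv G v lam c d = G.halfEdgeDeriv v lam c d + G.halfEdgeDeriv v lam d c := by
  rw [halfEdgeDeriv, halfEdgeDeriv, edgeDeriv, mul_comm (G.degree d : ℝ)]
  ring

theorem sum_neighborFinset_halfEdgeDeriv_of_mulVec_eq_smul {v : V → ℝ} {lam : ℝ}
    (h : normLap G *ᵥ v = lam • v) (c : V) :
    ∑ d ∈ G.neighborFinset c, G.halfEdgeDeriv v lam c d = 0 := by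
  rcases eq_or_ne (G.degree c) 0 with hc | hc
  · rw [← card_neighborFinset_eq_degree, card_eq_zero] at hc
    rw [hc, sum_empty]
  · simp only [halfEdgeDeriv, sum_sub_distrib, mul_div_assoc (v c), ← mul_sum,
      G.sum_neighborFinset_div_sqrt_of_mulVec_eq_smul h, sum_const, card_neighborFinset_eq_degree,
      nsmul_eq_mul]
    field_simp
    ring

theorem sum_sum_neighborFinset_edgeDeriv_of_mulVec_eq_smul {v : V → ℝ} {lam : ℝ}
    (h : normLap G *ᵥ v = lam • v) :
    ∑ c, ∑ d ∈ G.neighborFinset c, edgeDeriv G v lam c d = 0 := by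
  simp only [edgeDeriv_eq_halfEdgeDeriv_add, sum_add_distrib,
    G.sum_sum_neighborFinset_swap (G.halfEdgeDeriv v lam),
    G.sum_neighborFinset_halfEdgeDeriv_of_mulVec_eq_smul h, sum_const_zero, add_zero]

omit [DecidableEq V] in
theorem edgeDeriv_comm (v : V → ℝ) (lam : ℝ) (x y : V) :
    edgeDeriv G v lam x y = edgeDeriv G v lam y x := by
  rw [edgeDeriv, edgeDeriv, mul_comm (G.degree x : ℝ)]
  ring

section Kemeny

variable {n : ℕ} (w : Fin n → V → ℝ) (lam : Fin n → ℝ)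

-- The guard `lam i = 0` in `kemenyDeriv` is redundant: `1 / 0 = 0` in Lean.
omit [DecidableEq V] in
theorem kemenyDeriv_eq_sum (x y : V) :
    kemenyDeriv G w lam x y = ∑ i, -(1 / lam i ^ 2) * edgeDeriv G (w i) (lam i) x y := by
  refine sum_congr rfl fun i _ => ?_
  split_ifs with hi <;> simp [hi]

omit [DecidableEq V] in
theorem kemenyDeriv_comm (x y : V) : kemenyDeriv G w lam x y = kemenyDeriv G w lam y x := by
  simp only [kemenyDeriv_eq_sum, edgeDeriv_comm G _ _ x y]

omit [DecidableEq V] in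
theorem kemenyDeriv_eq_spectral_sums (x y : V) :
    kemenyDeriv G w lam x y
      = (∑ i, -((1 - lam i) / lam i ^ 2) * (w i x * w i x)) / G.degree x
        + (∑ i, -((1 - lam i) / lam i ^ 2) * (w i y * w i y)) / G.degree y
        + (∑ i, 2 / lam i ^ 2 * (w i x * w i y)) / √((G.degree x : ℝ) * G.degree y) := by
  simp only [kemenyDeriv_eq_sum, edgeDeriv, sum_div, ← sum_add_distrib]
  refine sum_congr rfl fun i _ => ?_
  ring

theorem kemenyDeriv_iso_apply (hcompl : ∀ x y, ∑ i, w i x * w i y = if x = y then 1 else 0)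
    (heig : ∀ i, normLap G *ᵥ w i = lam i • w i) (φ : G ≃g G) (x y : V) :
    kemenyDeriv G w lam (φ x) (φ y) = kemenyDeriv G w lam x y := by
  have hinv : ∀ (h : ℝ → ℝ) (a b : V),
      ∑ i, h (lam i) * (w i (φ a) * w i (φ b)) = ∑ i, h (lam i) * (w i a * w i b) :=
    Matrix.sum_mul_apply_equiv_of_submatrix_eq hcompl heig (ψ := φ.toEquiv) (G.normLap_submatrix_iso φ)
  rw [kemenyDeriv_eq_spectral_sums, kemenyDeriv_eq_spectral_sums, φ.degree_eq, φ.degree_eq,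
    hinv (fun t => -((1 - t) / t ^ 2)) x x, hinv (fun t => -((1 - t) / t ^ 2)) y y,
    hinv (fun t => 2 / t ^ 2) x y]

theorem sum_sum_neighborFinset_kemenyDeriv (heig : ∀ i, normLap G *ᵥ w i = lam i • w i) :
    ∑ c, ∑ d ∈ G.neighborFinset c, kemenyDeriv G w lam c d = 0 := by
  simp only [kemenyDeriv_eq_sum]
  rw [sum_congr rfl fun c _ => sum_comm, sum_comm]
  simp only [← mul_sum, G.sum_sum_neighborFinset_edgeDeriv_of_mulVec_eq_smul (heig _), mul_zero,
    sum_const_zero]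

end Kemeny

omit [DecidableEq V] in
theorem eq_zero_of_sum_sum_neighborFinset_eq_zero {M : Type*} [AddCommMonoid M]
    [IsAddTorsionFree M] {f : V → V → M} (hcomm : ∀ a b, f a b = f b a)
    (hiso : ∀ (φ : G ≃g G) a b, f (φ a) (φ b) = f a b)
    (hET : ∀ ⦃a b c d : V⦄, G.Adj a b → G.Adj c d → ∃ φ : G ≃g G, s(φ a, φ b) = s(c, d))
    (hsum : ∑ c, ∑ d ∈ G.neighborFinset c, f c d = 0) {x y : V} (hxy : G.Adj x y) :
    f x y = 0 := by
  have hconst : ∀ c, ∀ d ∈ G.neighborFinset c, f c d = f x y := by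
    intro c d hcd
    obtain ⟨φ, hφ⟩ := hET ((G.mem_neighborFinset c d).mp hcd) hxy
    rcases Sym2.eq_iff.mp hφ with ⟨hx, hy⟩ | ⟨hy, hx⟩
    · rw [← hiso φ, hx, hy]
    · rw [← hiso φ, hx, hy, hcomm]
  have hdegree : (∑ c, G.degree c) • f x y = 0 := by
    rw [← hsum, sum_smul]
    refine sum_congr rfl fun c _ => ?_
    rw [sum_congr rfl (hconst c), sum_const, card_neighborFinset_eq_degree]
  have hpos : ∑ c, G.degree c ≠ 0 := (sum_pos' (fun c _ => Nat.zero_le _)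
    ⟨x, mem_univ x, (G.degree_pos_iff_exists_adj x).mpr ⟨y, hxy⟩⟩).ne'
  exact IsAddTorsionFree.nsmul_right_injective hpos (by simpa using hdegree)

end SimpleGraph

theorem edge_transitive_kemeny_derivative_zero_general
    (G : SimpleGraph V) [DecidableRel G.Adj]
    (hET : ∀ ⦃a b c d : V⦄, G.Adj a b → G.Adj c d →
      ∃ φ : G ≃g G, s(φ a, φ b) = s(c, d))
    (w : Fin (Fintype.card V) → V → ℝ) (lam : Fin (Fintype.card V) → ℝ)
    (horth : ∀ i j, (∑ z, w i z * w j z) = if i = j then 1 else 0)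
    (heig : ∀ i, (normLap G).mulVec (w i) = lam i • w i)
    (x y : V) (hxy : G.Adj x y) :
    kemenyDeriv G w lam x y = 0 := by
  have hcompl := Matrix.sum_apply_mul_apply_eq_ite_of_orthonormal (Fintype.card_fin _) horth
  exact G.eq_zero_of_sum_sum_neighborFinset_eq_zero (G.kemenyDeriv_comm w lam)
    (G.kemenyDeriv_iso_apply w lam hcompl heig) hET (G.sum_sum_neighborFinset_kemenyDeriv w lam heig)
    hxy

theorem edge_transitive_kemeny_derivative_zero
    (G : SimpleGraph V) [DecidableRel G.Adj]
    (hdeg : ∀ z : V, 0 < G.degree z)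
    (hET : ∀ ⦃a b c d : V⦄, G.Adj a b → G.Adj c d →
      ∃ φ : G ≃g G, s(φ a, φ b) = s(c, d))
    (w : Fin (Fintype.card V) → V → ℝ) (lam : Fin (Fintype.card V) → ℝ)
    (horth : ∀ i j, (∑ z, w i z * w j z) = if i = j then 1 else 0)
    (heig : ∀ i, (normLap G).mulVec (w i) = lam i • w i)
    (x y : V) (hxy : G.Adj x y) :
    kemenyDeriv G w lam x y = 0 :=
  edge_transitive_kemeny_derivative_zero_general G hET w lam horth heig x y hxy
end
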